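/- arXiv:1206.0002 — 4 statements merged into one kernel-verified Lean document; each statement's English description precedes it below -/
import Mathlib

section
/- The function v defined piecewise by v(x) = sin(m x) + A₁ x + A₂ on [0, π) and v(x) = (m²η/(1+ηm²)) sin(m x) + B₁ e^{-x/√η} + B₂ e^{x/√η} on [π, 2π), with constants A₁ = (m/(1+ηm²))K, A₂ = (m√η/(1+ηm²))·((K+1)cosh(π/√η) − K − (−1)^m)/sinh(π/√η), B₁ = e^{2π/√η}(A₂(1−e^{−π/√η}) + A₁π)/(2 sinh(π/√η)), B₂ = −e^{−2π/√η}(A₂(1−e^{π/√η}) + A₁π)/(2 sinh(π/√η)), and K = −√η(1+(−1)^m)/(π·cotanh(π/(2√η)) + 2√η), is continuously differentiable at x = π and satisfies −v'' + (1/η)χ v = m² sin(m x) separately on (0,π) and (π,2π). -/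
open Real Set

set_option maxHeartbeats 2000000 in
/-- the explicit piecewise function `v` (fluid branch `f` on `[0,π)`,
solid branch `g` on `[π,2π)`) is continuously differentiable at `x = π`
(one-sided limits of `v` and `v'` agree, i.e. `f π = g π` and `f' π = g' π`)
and satisfies `−v'' + (1/η)χ v = m² sin(m x)` separately on `(0,π)` and `(π,2π)`. -/
theorem stmt_2 (η : ℝ) (hη : 0 < η) (m : ℕ) (hm : 0 < m)
    (K A₁ A₂ B₁ B₂ : ℝ)
    (hK : K = -(Real.sqrt η * (1 + (-1 : ℝ) ^ m)) /
      (π * (Real.cosh (π / (2 * Real.sqrt η)) / Real.sinh (π / (2 * Real.sqrt η)))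
        + 2 * Real.sqrt η))
    (hA₁ : A₁ = (m / (1 + η * m ^ 2)) * K)
    (hA₂ : A₂ = (m * Real.sqrt η / (1 + η * m ^ 2)) *
      (((K + 1) * Real.cosh (π / Real.sqrt η) - K - (-1 : ℝ) ^ m) /
        Real.sinh (π / Real.sqrt η)))
    (hB₁ : B₁ = Real.exp (2 * π / Real.sqrt η) *
      (A₂ * (1 - Real.exp (-π / Real.sqrt η)) + A₁ * π) /
      (2 * Real.sinh (π / Real.sqrt η)))
    (hB₂ : B₂ = -(Real.exp (-(2 * π) / Real.sqrt η) *
      (A₂ * (1 - Real.exp (π / Real.sqrt η)) + A₁ * π)) /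
      (2 * Real.sinh (π / Real.sqrt η)))
    (f g : ℝ → ℝ)
    (hf : f = fun x => Real.sin (m * x) + A₁ * x + A₂)
    (hg : g = fun x => (m ^ 2 * η / (1 + η * m ^ 2)) * Real.sin (m * x)
      + B₁ * Real.exp (-x / Real.sqrt η) + B₂ * Real.exp (x / Real.sqrt η)) :
    f π = g π ∧ deriv f π = deriv g π ∧
    (∀ x ∈ Ioo 0 π, -(deriv (deriv f) x) = (m : ℝ) ^ 2 * Real.sin (m * x)) ∧
    (∀ x ∈ Ioo π (2 * π),
      -(deriv (deriv g) x) + (1 / η) * g x = (m : ℝ) ^ 2 * Real.sin (m * x)) := by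
  have hπ := Real.pi_pos
  obtain ⟨s, hsdef⟩ : ∃ s, Real.sqrt η = s := ⟨_, rfl⟩
  have hs0 : 0 < s := hsdef ▸ Real.sqrt_pos.mpr hη
  have hη' : η = s ^ 2 := by rw [← hsdef]; exact (Real.sq_sqrt hη.le).symm
  rw [hsdef] at hK hA₂ hB₁ hB₂ hg
  have hm0 : (0:ℝ) < 1 + s ^ 2 * (m:ℝ) ^ 2 := by positivity
  obtain ⟨F, hFdef⟩ : ∃ F, Real.exp (π / (2 * s)) = F := ⟨_, rfl⟩
  have hF0 : 0 < F := hFdef ▸ Real.exp_pos _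
  have hF1 : 1 < F := by
    rw [← hFdef]
    calc (1:ℝ) = Real.exp 0 := Real.exp_zero.symm
      _ < _ := Real.exp_lt_exp.mpr (by positivity)
  have h2 : (0:ℝ) < F ^ 2 - 1 := by nlinarith
  have h4 : (0:ℝ) < F ^ 4 - 1 := by nlinarith
  have key : (π:ℝ) / s = π / (2 * s) + π / (2 * s) := by field_simp; ring
  have hA : Real.exp (π / s) = F ^ 2 := by rw [key, Real.exp_add, hFdef]; ring
  have hB : Real.exp (-π / s) = (F ^ 2)⁻¹ := by rw [neg_div, Real.exp_neg, hA]
  have key2 : (2 * π) / s = π / s + π / s := by ring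
  have hC : Real.exp (2 * π / s) = F ^ 2 * F ^ 2 := by rw [key2, Real.exp_add, hA]
  have hD : Real.exp (-(2 * π) / s) = (F ^ 2 * F ^ 2)⁻¹ := by
    rw [neg_div, Real.exp_neg, hC]
  have hsinh : Real.sinh (π / s) = (F ^ 4 - 1) / (2 * F ^ 2) := by
    rw [Real.sinh_eq, hA, show -(π / s) = -π / s from (neg_div _ _).symm, hB]
    field_simp
  have hcosh : Real.cosh (π / s) = (F ^ 4 + 1) / (2 * F ^ 2) := by
    rw [Real.cosh_eq, hA, show -(π / s) = -π / s from (neg_div _ _).symm, hB]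
    field_simp
  have hsinh2 : Real.sinh (π / (2 * s)) = (F ^ 2 - 1) / (2 * F) := by
    rw [Real.sinh_eq, Real.exp_neg, hFdef]
    field_simp
  have hcosh2 : Real.cosh (π / (2 * s)) = (F ^ 2 + 1) / (2 * F) := by
    rw [Real.cosh_eq, Real.exp_neg, hFdef]
    field_simp
  have hP : (0:ℝ) < π * (F ^ 2 + 1) + 2 * s * (F ^ 2 - 1) := by
    nlinarith [mul_pos hs0 h2, mul_pos Real.pi_pos (by positivity : (0:ℝ) < F ^ 2 + 1)]
  have hK' : K = -(s * (1 + (-1 : ℝ) ^ m)) * (F ^ 2 - 1) /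
      (π * (F ^ 2 + 1) + 2 * s * (F ^ 2 - 1)) := by
    rw [hK, hcosh2, hsinh2]
    have h1 : (F ^ 2 + 1) / (2 * F) / ((F ^ 2 - 1) / (2 * F)) = (F ^ 2 + 1) / (F ^ 2 - 1) := by
      rw [div_div_div_comm, div_self (by positivity : (2*F) ≠ 0), div_one]
    rw [h1]
    have hQ : (0:ℝ) < π * ((F ^ 2 + 1) / (F ^ 2 - 1)) + 2 * s :=
      add_pos (mul_pos Real.pi_pos (div_pos (by positivity) h2)) (by linarith)
    rw [div_eq_div_iff hQ.ne' hP.ne']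
    field_simp
  have hcosm : Real.cos ((m:ℝ) * π) = (-1 : ℝ) ^ m := by
    simpa using Real.cos_nat_mul_pi_sub 0 m
  -- first derivative of f
  have hdf : deriv f = fun x => Real.cos (↑m * x) * ↑m + A₁ := by
    funext x
    have h : HasDerivAt (fun y : ℝ => Real.sin (↑m * y) + A₁ * y + A₂)
        (Real.cos (↑m * x) * ((m : ℝ) * 1) + A₁ * 1) x :=
      ((((hasDerivAt_id x).const_mul (m : ℝ)).sin).add
        ((hasDerivAt_id x).const_mul A₁)).add_const A₂
    rw [hf, h.deriv]; ring
  have hddf : ∀ x, deriv (deriv f) x = -((m:ℝ) ^ 2 * Real.sin (↑m * x)) := by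
    intro x
    rw [hdf]
    have h : HasDerivAt (fun y : ℝ => Real.cos (↑m * y) * ↑m + A₁)
        (-Real.sin (↑m * x) * ((m : ℝ) * 1) * ↑m) x :=
      ((((hasDerivAt_id x).const_mul (m : ℝ)).cos).mul_const (m : ℝ)).add_const A₁
    rw [h.deriv]; ring
  -- first derivative of g
  have hdg : deriv g = fun x => (↑m ^ 2 * η / (1 + η * ↑m ^ 2)) * (Real.cos (↑m * x) * (↑m * 1))
      + B₁ * (Real.exp (-x / s) * (-1 / s)) + B₂ * (Real.exp (x / s) * (1 / s)) := by
    funext x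
    have h : HasDerivAt (fun y : ℝ => (↑m ^ 2 * η / (1 + η * ↑m ^ 2)) * Real.sin (↑m * y)
        + B₁ * Real.exp (-y / s) + B₂ * Real.exp (y / s))
        ((↑m ^ 2 * η / (1 + η * ↑m ^ 2)) * (Real.cos (↑m * x) * ((m : ℝ) * 1))
          + B₁ * (Real.exp (-x / s) * (-1 / s)) + B₂ * (Real.exp (x / s) * (1 / s))) x :=
      (((((hasDerivAt_id x).const_mul (m : ℝ)).sin).const_mul _).add
        (((((hasDerivAt_id x).neg).div_const s).exp).const_mul B₁)).add
        ((((hasDerivAt_id x).div_const s).exp).const_mul B₂)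
    rw [hg, h.deriv]
  have hddg : ∀ x, deriv (deriv g) x =
      (↑m ^ 2 * η / (1 + η * ↑m ^ 2)) * (-Real.sin (↑m * x) * ((m:ℝ) * 1) * (↑m * 1))
      + B₁ * (Real.exp (-x / s) * (-1 / s) * (-1 / s))
      + B₂ * (Real.exp (x / s) * (1 / s) * (1 / s)) := by
    intro x
    rw [hdg]
    have h : HasDerivAt (fun y : ℝ => (↑m ^ 2 * η / (1 + η * ↑m ^ 2)) * (Real.cos (↑m * y) * (↑m * 1))
        + B₁ * (Real.exp (-y / s) * (-1 / s)) + B₂ * (Real.exp (y / s) * (1 / s)))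
        ((↑m ^ 2 * η / (1 + η * ↑m ^ 2)) * (-Real.sin (↑m * x) * ((m:ℝ) * 1) * (↑m * 1))
          + B₁ * (Real.exp (-x / s) * (-1 / s) * (-1 / s))
          + B₂ * (Real.exp (x / s) * (1 / s) * (1 / s))) x :=
      ((((((hasDerivAt_id x).const_mul (m : ℝ)).cos).mul_const ((m:ℝ) * 1)).const_mul _).add
        ((((((hasDerivAt_id x).neg).div_const s).exp).mul_const (-1 / s)).const_mul B₁)).add
        (((((hasDerivAt_id x).div_const s).exp).mul_const (1 / s)).const_mul B₂)
    rw [h.deriv]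
  refine ⟨?_, ?_, ?_, ?_⟩
  · -- f π = g π
    simp only [hf, hg, Real.sin_nat_mul_pi]
    rw [hB₁, hB₂, hsinh, hA, hB, hC, hD]
    field_simp
    ring
  · -- deriv f π = deriv g π
    simp only [hdf, hdg, Real.sin_nat_mul_pi, hcosm, hB, hA, hη']
    have hsum : B₁ * ((F ^ 2)⁻¹ * (-1 / s)) + B₂ * (F ^ 2 * (1 / s)) =
        (-(A₂ * (F ^ 2 - 1) ^ 2) - A₁ * π * (F ^ 4 + 1)) / ((F ^ 4 - 1) * s) := by
      rw [hB₁, hB₂, hsinh, hA, hB, hC, hD]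
      field_simp
      ring
    have key2 : (-1 : ℝ) ^ m * (m : ℝ) + A₁ =
        (m : ℝ) ^ 2 * s ^ 2 / (1 + s ^ 2 * (m : ℝ) ^ 2) * ((-1 : ℝ) ^ m * ((m : ℝ) * 1)) +
        (-(A₂ * (F ^ 2 - 1) ^ 2) - A₁ * π * (F ^ 4 + 1)) / ((F ^ 4 - 1) * s) := by
      rw [hA₂, hA₁, hη', hK', hcosh, hsinh]
      field_simp
      ring
    linear_combination key2 - hsum
  · intro x _
    rw [hddf x]; ring
  · intro x _
    rw [hddg x]
    simp only [hg]
    rw [hη']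
    field_simp
    ring
end

section
/- The squared L² error of the penalized solution over the fluid domain satisfies (1/π)∫₀^π (A₁x + A₂)² dx ~ (m²η/3)(2 − (−1)^m) as η → 0, where A₁ and A₂ are the coefficients from the exact penalized solution. -/
open Real Set Filter Topology

/-!
`(1/π)∫₀^π (A₁x + A₂)² dx = A₁²π²/3 + A₁A₂π + A₂²`. Writing `s = √η` and `c = (-1)^m`,
both coefficients are `s` times functions of `s` with finite limits as `s → 0⁺`: since `coth`
and `1/sinh` tend to `1` and `0` at `+∞`, `A₁/s → -m(1 + c)/π` and `A₂/s → m`. Hence the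
error is `η` times a quantity tending to `m²((1 + c)²/3 - c)`, which is `m²(2 - c)/3` because
`c² = 1`.
-/

namespace Real

lemma tendsto_sinh_atTop : Tendsto sinh atTop atTop := by
  have h : Tendsto (fun t => (exp t + -exp (-t)) / 2) atTop atTop :=
    (tendsto_exp_atTop.atTop_add tendsto_exp_neg_atTop_nhds_zero.neg).atTop_div_const two_pos
  exact h.congr fun t => by rw [sinh_eq, sub_eq_add_neg]

lemma tendsto_inv_sinh_atTop : Tendsto (fun t => (sinh t)⁻¹) atTop (𝓝 0) :=
  tendsto_sinh_atTop.inv_tendsto_atTop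

lemma tendsto_cosh_div_sinh_atTop : Tendsto (fun t => cosh t / sinh t) atTop (𝓝 1) := by
  have h : Tendsto (fun t => 1 + exp (-t) * (sinh t)⁻¹) atTop (𝓝 (1 + 0 * 0)) :=
    tendsto_const_nhds.add (tendsto_exp_neg_atTop_nhds_zero.mul tendsto_inv_sinh_atTop)
  rw [mul_zero, add_zero] at h
  refine h.congr' ?_
  filter_upwards [tendsto_sinh_atTop.eventually_gt_atTop 0] with t ht
  rw [← cosh_sub_sinh]
  field_simp
  ring

lemma tendsto_sqrt_nhdsGT_zero : Tendsto sqrt (𝓝[>] 0) (𝓝[>] 0) := by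
  refine tendsto_nhdsWithin_iff.2 ⟨?_, ?_⟩
  · simpa using (continuous_sqrt.tendsto 0).mono_left nhdsWithin_le_nhds
  · filter_upwards [self_mem_nhdsWithin] with x hx using sqrt_pos.2 hx

end Real

lemma tendsto_const_div_nhdsGT_zero {a : ℝ} (ha : 0 < a) :
    Tendsto (fun s => a / s) (𝓝[>] 0) atTop := by
  simpa only [div_eq_mul_inv] using tendsto_inv_nhdsGT_zero.const_mul_atTop ha

lemma mean_integral_sq_affine {L : ℝ} (hL : L ≠ 0) (A B : ℝ) :
    (1 / L) * ∫ x in (0:ℝ)..L, (A * x + B) ^ 2 = A ^ 2 * L ^ 2 / 3 + A * B * L + B ^ 2 := by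
  have hderiv : ∀ x ∈ uIcc 0 L,
      HasDerivAt (fun x => A ^ 2 * x ^ 3 / 3 + A * B * x ^ 2 + B ^ 2 * x) ((A * x + B) ^ 2) x := by
    intro x _
    refine (((((hasDerivAt_pow 3 x).const_mul (A ^ 2)).div_const 3).add
      ((hasDerivAt_pow 2 x).const_mul (A * B))).add
        ((hasDerivAt_id' x).const_mul (B ^ 2))).congr_deriv ?_
    push_cast
    ring
  rw [intervalIntegral.integral_eq_sub_of_hasDerivAt hderiv
    ((by fun_prop : Continuous fun x => (A * x + B) ^ 2).intervalIntegrable 0 L)]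
  field_simp
  ring

lemma tendsto_div_one_add_sq_mul_sq (m : ℝ) :
    Tendsto (fun s : ℝ => m / (1 + s ^ 2 * m ^ 2)) (𝓝[>] 0) (𝓝 m) := by
  have h : ContinuousAt (fun s : ℝ => m / (1 + s ^ 2 * m ^ 2)) 0 := by
    fun_prop (disch := positivity)
  simpa using h.tendsto.mono_left nhdsWithin_le_nhds

section ScaledCoefficients

variable (m c : ℝ)

-- With `s = √η` and `c = (-1)^m`, the paper's `K`, `A₁`, `A₂` are `s` times these.
noncomputable def scaledK (s : ℝ) : ℝ :=
  -(1 + c) / (π * (cosh (π / (2 * s)) / sinh (π / (2 * s))) + 2 * s)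

noncomputable def scaledA₁ (s : ℝ) : ℝ :=
  m / (1 + s ^ 2 * m ^ 2) * scaledK c s

noncomputable def scaledA₂ (s : ℝ) : ℝ :=
  m / (1 + s ^ 2 * m ^ 2) * ((s * scaledK c s + 1) * (cosh (π / s) / sinh (π / s)) -
    (s * scaledK c s + c) * (sinh (π / s))⁻¹)

lemma tendsto_scaledK : Tendsto (scaledK c) (𝓝[>] 0) (𝓝 (-(1 + c) / π)) := by
  have hcoth : Tendsto (fun s : ℝ => cosh (π / (2 * s)) / sinh (π / (2 * s)))
      (𝓝[>] 0) (𝓝 1) := by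
    simpa only [Function.comp_def, div_mul_eq_div_div] using
      tendsto_cosh_div_sinh_atTop.comp (tendsto_const_div_nhdsGT_zero (half_pos pi_pos))
  have hden : Tendsto (fun s : ℝ => π * (cosh (π / (2 * s)) / sinh (π / (2 * s))) + 2 * s)
      (𝓝[>] 0) (𝓝 π) := by
    simpa using (hcoth.const_mul π).add ((tendsto_id.mono_left nhdsWithin_le_nhds).const_mul 2)
  exact tendsto_const_nhds.div hden pi_ne_zero

lemma tendsto_scaledA₁ :
    Tendsto (scaledA₁ m c) (𝓝[>] 0) (𝓝 (m * (-(1 + c) / π))) :=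
  (tendsto_div_one_add_sq_mul_sq m).mul (tendsto_scaledK c)

lemma tendsto_scaledA₂ : Tendsto (scaledA₂ m c) (𝓝[>] 0) (𝓝 m) := by
  have hsK : Tendsto (fun s => s * scaledK c s) (𝓝[>] 0) (𝓝 0) := by
    simpa using (tendsto_id.mono_left nhdsWithin_le_nhds).mul (tendsto_scaledK c)
  have hpi := tendsto_const_div_nhdsGT_zero pi_pos
  have h : Tendsto (scaledA₂ m c) (𝓝[>] 0) (𝓝 (m * ((0 + 1) * 1 - (0 + c) * 0))) :=
    (tendsto_div_one_add_sq_mul_sq m).mul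
      (((hsK.add_const 1).mul (tendsto_cosh_div_sinh_atTop.comp hpi)).sub
        ((hsK.add_const c).mul (tendsto_inv_sinh_atTop.comp hpi)))
  simpa using h

variable {c} in
lemma tendsto_scaled_mean_sq (hc : c ^ 2 = 1) :
    Tendsto (fun s => scaledA₁ m c s ^ 2 * π ^ 2 / 3 + scaledA₁ m c s * scaledA₂ m c s * π +
      scaledA₂ m c s ^ 2) (𝓝[>] 0) (𝓝 (m ^ 2 / 3 * (2 - c))) := by
  have h := (((tendsto_scaledA₁ m c).pow 2).mul_const (π ^ 2)).div_const 3 |>.add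
    (((tendsto_scaledA₁ m c).mul (tendsto_scaledA₂ m c)).mul_const π) |>.add
    ((tendsto_scaledA₂ m c).pow 2)
  convert h using 2
  field_simp
  linear_combination (-m ^ 2) * hc

end ScaledCoefficients

/-- the squared L² penalization error over the fluid domain,
`(1/π)∫₀^π (A₁ x + A₂)² dx`, is asymptotically `(m²η/3)(2 − (−1)^m)` as `η → 0⁺`. -/
theorem stmt_3 (m : ℕ) (hm : 0 < m)
    (K A₁ A₂ : ℝ → ℝ)
    (hK : ∀ η, K η = -(Real.sqrt η * (1 + (-1 : ℝ) ^ m)) /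
      (π * (Real.cosh (π / (2 * Real.sqrt η)) / Real.sinh (π / (2 * Real.sqrt η)))
        + 2 * Real.sqrt η))
    (hA₁ : ∀ η, A₁ η = (m / (1 + η * m ^ 2)) * K η)
    (hA₂ : ∀ η, A₂ η = (m * Real.sqrt η / (1 + η * m ^ 2)) *
      (((K η + 1) * Real.cosh (π / Real.sqrt η) - K η - (-1 : ℝ) ^ m) /
        Real.sinh (π / Real.sqrt η))) :
    Tendsto (fun η : ℝ =>
        ((1 / π) * ∫ x in (0:ℝ)..π, (A₁ η * x + A₂ η) ^ 2) /
          ((m ^ 2 * η / 3) * (2 - (-1 : ℝ) ^ m)))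
      (nhdsWithin 0 (Ioi 0)) (nhds 1) := by
  set c : ℝ := (-1) ^ m
  have hc : c ^ 2 = 1 := by rw [← pow_mul, mul_comm, pow_mul]; norm_num
  have h2c : 2 - c ≠ 0 := by nlinarith
  have hlim := ((tendsto_scaled_mean_sq m hc).comp tendsto_sqrt_nhdsGT_zero).div_const
    ((m : ℝ) ^ 2 / 3 * (2 - c))
  rw [div_self (mul_ne_zero (by positivity) h2c)] at hlim
  refine hlim.congr' ?_
  filter_upwards [self_mem_nhdsWithin] with η hη
  obtain ⟨s, hs, rfl⟩ : ∃ s > 0, η = s ^ 2 :=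
    ⟨√η, sqrt_pos.2 hη, (sq_sqrt (le_of_lt hη)).symm⟩
  have hA₁s : A₁ (s ^ 2) = s * scaledA₁ m c s := by
    rw [hA₁, hK, sqrt_sq hs.le, scaledA₁, scaledK]
    ring
  have hA₂s : A₂ (s ^ 2) = s * scaledA₂ m c s := by
    rw [hA₂, hK, sqrt_sq hs.le, scaledA₂, scaledK]
    ring
  rw [Function.comp_apply, sqrt_sq hs.le, mean_integral_sq_affine pi_ne_zero, hA₁s, hA₂s]
  field_simp
end

section
/- As η → 0⁺, for fixed k > 0 and fixed μ with 0 < μ < k² + 1/η eventually, the penalized Stokes determinant G*₋(k, μ, η) = k·cotanh(πk/2) − (1−2ημ)(1−ημ) q₀ cotan(πq₀/2) + μ√(η(1−ηq₀²))(1−2ημ) cotanh(−πq₁/2), with q₀ = √(μ−k²) and q₁ = √(1/η − μ + k²), converges to Gᵒ₋(k, μ) = k·cotanh(πk/2) − q₀ cotan(πq₀/2), provided μ > k² and πq₀/2 is not a multiple of π. -/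
/-!
As `η → 0⁺` the coefficients `(1 - 2ημ)(1 - ημ)` and `μ √(η(1 - ηq₀²))(1 - 2ημ)` tend to `1`
and `0` by continuity, while `q₁ = √(1/η - μ + k²) → ∞`, so `cotanh(-πq₁/2) → -1` stays bounded.
-/

open Real Set Filter Topology

-- Multiplying numerator and denominator by `2 eˣ`; both sides are `0` at `x = 0`.
lemma Real.cosh_div_sinh_eq (x : ℝ) :
    cosh x / sinh x = (exp (2 * x) + 1) / (exp (2 * x) - 1) := by
  have hx : 2 * exp x ≠ 0 := by positivity
  have h2x : exp (2 * x) = exp x * exp x := by rw [← exp_add]; ring_nf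
  have hinv : exp x * exp (-x) = 1 := by rw [← exp_add]; simp
  rw [← mul_div_mul_right _ _ hx, cosh_eq, sinh_eq, h2x]
  congr 1
  · linear_combination hinv
  · linear_combination -hinv

lemma Real.tendsto_cosh_div_sinh_atBot :
    Tendsto (fun x => cosh x / sinh x) atBot (𝓝 (-1)) := by
  have h : Tendsto (fun x : ℝ => exp (2 * x)) atBot (𝓝 0) :=
    tendsto_exp_atBot.comp (tendsto_id.const_mul_atBot two_pos)
  simp_rw [cosh_div_sinh_eq]
  convert (h.add_const 1).div (h.sub_const 1) (by norm_num) using 2 <;> norm_num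

lemma tendsto_sqrt_one_div_add_nhdsGT_zero (c : ℝ) :
    Tendsto (fun η : ℝ => √(1 / η + c)) (𝓝[>] 0) atTop :=
  tendsto_sqrt_atTop.comp <| tendsto_atTop_add_const_right _ _ <|
    tendsto_inv_nhdsGT_zero.congr fun η => (one_div η).symm

theorem stmt_12_general (k μ : ℝ)
    (q₀ : ℝ) :
    Tendsto (fun η : ℝ =>
        k * (Real.cosh (π * k / 2) / Real.sinh (π * k / 2)) -
          (1 - 2 * η * μ) * (1 - η * μ) * q₀ *
            (Real.cos (π * q₀ / 2) / Real.sin (π * q₀ / 2)) +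
          μ * Real.sqrt (η * (1 - η * q₀ ^ 2)) * (1 - 2 * η * μ) *
            (Real.cosh (-(π * Real.sqrt (1 / η - μ + k ^ 2)) / 2) /
              Real.sinh (-(π * Real.sqrt (1 / η - μ + k ^ 2)) / 2)))
      (nhdsWithin 0 (Ioi 0))
      (nhds (k * (Real.cosh (π * k / 2) / Real.sinh (π * k / 2)) -
        q₀ * (Real.cos (π * q₀ / 2) / Real.sin (π * q₀ / 2)))) := by
  have hq₁ : Tendsto (fun η : ℝ => √(1 / η - μ + k ^ 2)) (𝓝[>] 0) atTop := by
    simpa only [sub_eq_add_neg, add_assoc] using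
      tendsto_sqrt_one_div_add_nhdsGT_zero (-μ + k ^ 2)
  have hcoth := tendsto_cosh_div_sinh_atBot.comp <|
    (tendsto_neg_atTop_atBot.comp (hq₁.const_mul_atTop pi_pos)).atBot_div_const two_pos
  have hdirichlet : Tendsto (fun η : ℝ => (1 - 2 * η * μ) * (1 - η * μ)) (𝓝[>] 0) (𝓝 1) := by
    have hcont : Continuous fun η : ℝ => (1 - 2 * η * μ) * (1 - η * μ) := by fun_prop
    simpa using (hcont.tendsto 0).mono_left nhdsWithin_le_nhds
  have hpenalty : Tendsto (fun η : ℝ => μ * √(η * (1 - η * q₀ ^ 2)) * (1 - 2 * η * μ))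
      (𝓝[>] 0) (𝓝 0) := by
    have hcont : Continuous fun η : ℝ => μ * √(η * (1 - η * q₀ ^ 2)) * (1 - 2 * η * μ) := by
      fun_prop
    simpa using (hcont.tendsto 0).mono_left nhdsWithin_le_nhds
  simpa using (tendsto_const_nhds.sub
    ((hdirichlet.mul_const q₀).mul_const _)).add (hpenalty.mul hcoth)

/-- for fixed `k > 0` and `μ > k²` with `π q₀/2` not a multiple
of `π`, the penalized Stokes determinant `G*₋(k,μ,η)` converges to the
Dirichlet determinant `Gᵒ₋(k,μ) = k cotanh(πk/2) − q₀ cotan(πq₀/2)` as `η → 0⁺`. -/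
theorem stmt_12 (k μ : ℝ) (hk : 0 < k) (hμ : k ^ 2 < μ)
    (q₀ : ℝ) (hq₀ : q₀ = Real.sqrt (μ - k ^ 2))
    (hnotmult : ¬∃ n : ℤ, π * q₀ / 2 = (n : ℝ) * π) :
    Tendsto (fun η : ℝ =>
        k * (Real.cosh (π * k / 2) / Real.sinh (π * k / 2)) -
          (1 - 2 * η * μ) * (1 - η * μ) * q₀ *
            (Real.cos (π * q₀ / 2) / Real.sin (π * q₀ / 2)) +
          μ * Real.sqrt (η * (1 - η * q₀ ^ 2)) * (1 - 2 * η * μ) *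
            (Real.cosh (-(π * Real.sqrt (1 / η - μ + k ^ 2)) / 2) /
              Real.sinh (-(π * Real.sqrt (1 / η - μ + k ^ 2)) / 2)))
      (nhdsWithin 0 (Ioi 0))
      (nhds (k * (Real.cosh (π * k / 2) / Real.sinh (π * k / 2)) -
        q₀ * (Real.cos (π * q₀ / 2) / Real.sin (π * q₀ / 2)))) :=
  stmt_12_general k μ q₀
end

section
/- Suppose ½‖e‖² has the form of the weighted sum ‖b‖₂² = Σ_{k=−N/2}^{N/2−1} (η/(1+ηk²))² |r_k|², where |r_k|² = (m²π²/18)·((1+(−1)^{m+k})η^{−1}k² + (1−(−1)^{m+k})η^{−2})/N⁴. Then ‖b‖₂² ~ (m²π³/(18√η))·N^{−4} as √η N → ∞ and η → 0, in the sense that the sum Σ_k (η/(1+ηk²))²·(m²π²/(18N⁴))·((1+(−1)^{m+k})η^{−1}k² + (1−(−1)^{m+k})η^{−2}) equals (m²π³/(18√η))N^{−4}(1 + o(1)). -/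
/-!
With `g(x) = 1 / (1 + η x²)` and `ε_k = (-1)^(m+k)`, the `k`-th summand is
`c N⁻⁴ (g(k) + ε_k (g(k) - 2 g(k)²))` with `c = m²π²/18`. The plain part is a Riemann sum:
comparing it with `∫ g = arctan (√η x) / √η` gives `√η Σ g(k) = 2 arctan (√η N/2) + O(√η) → π`.
The alternating part stays bounded: `g` and `g²` are even and decrease on `[0, ∞)`, so each
half of the alternating sum is controlled by the Leibniz bound; multiplied by `√η` it vanishes.
-/

open Real Filter Topology Finset

lemma AntitoneOn.abs_sum_add_sum_succ_sub_integral_le {f : ℝ → ℝ}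
    (hf : AntitoneOn f (Set.Ici 0)) (M : ℕ) :
    |∑ i ∈ range M, f i + ∑ i ∈ range M, f (i + 1) - 2 * ∫ x in 0..M, f x| ≤ f 0 - f M := by
  have hfM : AntitoneOn f (Set.Icc 0 (0 + M)) := hf.mono Set.Icc_subset_Ici_self
  have hle := hfM.integral_le_sum
  have hge := hfM.sum_le_integral
  have htel := sum_range_sub' (fun i : ℕ => f i) M
  simp only [zero_add, Nat.cast_add, Nat.cast_one, Nat.cast_zero] at hle hge htel
  rw [sum_sub_distrib] at htel
  rw [abs_le]
  constructor <;> linarith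

lemma sum_range_neg_one_pow_mul_mem_Icc {a : ℕ → ℝ} (ha : Antitone a) (ha₀ : ∀ i, 0 ≤ a i)
    (n : ℕ) : ∑ i ∈ range n, (-1) ^ i * a i ∈ Set.Icc 0 (a 0) := by
  induction n generalizing a with
  | zero => simpa using ha₀ 0
  | succ n ih =>
    have hshift := ih (ha.comp_monotone (fun _ _ h => Nat.succ_le_succ h)) (fun i => ha₀ _)
    simp only [Function.comp_apply] at hshift
    rw [sum_range_succ']
    simp only [pow_succ, mul_neg_one, neg_mul, sum_neg_distrib, pow_zero, one_mul]
    have := ha (Nat.zero_le 1)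
    constructor <;> linarith [hshift.1, hshift.2]

lemma sum_Icc_neg_of_even {β : Type*} [AddCommMonoid β] (ψ : ℤ → β) (hψ : ∀ k, ψ (-k) = ψ k)
    (M : ℕ) :
    ∑ k ∈ Icc (-(M : ℤ)) (M - 1), ψ k = ∑ i ∈ range M, ψ i + ∑ i ∈ range M, ψ (i + 1) := by
  induction M with
  | zero => simp
  | succ M ih =>
    have hIcc : Icc (-((M + 1 : ℕ) : ℤ)) ((M + 1 : ℕ) - 1)
        = insert (-((M : ℤ) + 1)) (insert (M : ℤ) (Icc (-(M : ℤ)) (M - 1))) := by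
      ext k; simp only [mem_Icc, mem_insert]; push_cast; omega
    rw [hIcc, sum_insert (by simp; omega), sum_insert (by simp), ih, sum_range_succ,
      sum_range_succ, hψ]
    abel

lemma sum_range_neg_one_zpow_add_mul (e : ℤ) (a : ℕ → ℝ) (n : ℕ) :
    ∑ i ∈ range n, (-1 : ℝ) ^ (e + i) * a i = (-1) ^ e * ∑ i ∈ range n, (-1) ^ i * a i := by
  rw [mul_sum]
  refine sum_congr rfl fun i _ => ?_
  rw [zpow_add₀ (by norm_num), zpow_natCast, mul_assoc]

noncomputable def lorentzian (η x : ℝ) : ℝ := (1 + η * x ^ 2)⁻¹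

lemma lorentzian_pos {η : ℝ} (hη : 0 ≤ η) (x : ℝ) : 0 < lorentzian η x := by
  unfold lorentzian; positivity

lemma lorentzian_le_one {η : ℝ} (hη : 0 ≤ η) (x : ℝ) : lorentzian η x ≤ 1 :=
  inv_le_one_of_one_le₀ (le_add_of_nonneg_right (by positivity))

lemma lorentzian_neg (η x : ℝ) : lorentzian η (-x) = lorentzian η x := by
  simp [lorentzian]

lemma lorentzian_antitoneOn {η : ℝ} (hη : 0 ≤ η) : AntitoneOn (lorentzian η) (Set.Ici 0) := by
  intro x hx y _ hxy
  unfold lorentzian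
  gcongr

lemma integral_lorentzian {η : ℝ} (hη : 0 < η) (b : ℝ) :
    ∫ x in 0..b, lorentzian η x = arctan (√η * b) / √η := by
  have hsq : ∀ x, lorentzian η x = (1 + (√η * x) ^ 2)⁻¹ := fun x => by
    rw [lorentzian, mul_pow, sq_sqrt hη.le]
  simp_rw [hsq]
  rw [intervalIntegral.integral_comp_mul_left (fun y => (1 + y ^ 2)⁻¹)
    (sqrt_pos.2 hη).ne']
  simp [integral_inv_one_add_sq, div_eq_inv_mul]

lemma abs_sum_neg_one_pow_mul_lorentzian_sub_le {η : ℝ} (hη : 0 ≤ η) {x₀ : ℝ} (hx₀ : 0 ≤ x₀)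
    (n : ℕ) :
    |∑ i ∈ range n, (-1) ^ i *
      (lorentzian η (i + x₀) - 2 * lorentzian η (i + x₀) ^ 2)| ≤ 3 := by
  set a : ℕ → ℝ := fun i => lorentzian η (i + x₀)
  have ha : Antitone a := fun i j hij =>
    lorentzian_antitoneOn hη (by simp only [Set.mem_Ici]; positivity)
      (by simp only [Set.mem_Ici]; positivity) (by gcongr)
  have ha₀ : ∀ i, 0 ≤ a i := fun i => (lorentzian_pos hη _).le
  have h₁ := sum_range_neg_one_pow_mul_mem_Icc ha ha₀ n
  have h₂ := sum_range_neg_one_pow_mul_mem_Icc (a := fun i => a i ^ 2)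
    (fun i j hij => pow_le_pow_left₀ (ha₀ j) (ha hij) 2) (fun i => sq_nonneg _) n
  have ha0 : a 0 ≤ 1 := lorentzian_le_one hη _
  have hsplit : ∑ i ∈ range n, (-1) ^ i * (a i - 2 * a i ^ 2)
      = ∑ i ∈ range n, (-1) ^ i * a i - 2 * ∑ i ∈ range n, (-1) ^ i * a i ^ 2 := by
    rw [mul_sum, ← sum_sub_distrib]; congr 1; ext i; ring
  change |∑ i ∈ range n, (-1) ^ i * (a i - 2 * a i ^ 2)| ≤ 3
  rw [hsplit, abs_le]
  simp only [Set.mem_Icc] at h₁ h₂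
  constructor <;> nlinarith [h₁.1, h₁.2, h₂.1, h₂.2, ha₀ 0]

noncomputable def lorentzianSum (η : ℝ) (M : ℕ) : ℝ :=
  ∑ k ∈ Icc (-(M : ℤ)) (M - 1), lorentzian η k

noncomputable def lorentzianAltSum (η : ℝ) (e : ℤ) (M : ℕ) : ℝ :=
  ∑ k ∈ Icc (-(M : ℤ)) (M - 1), (-1 : ℝ) ^ (e + k) * (lorentzian η k - 2 * lorentzian η k ^ 2)

lemma abs_lorentzianAltSum_le {η : ℝ} (hη : 0 ≤ η) (e : ℤ) (M : ℕ) :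
    |lorentzianAltSum η e M| ≤ 6 := by
  have heven : ∀ k : ℤ,
      (-1 : ℝ) ^ (e + -k) * (lorentzian η (-k : ℤ) - 2 * lorentzian η (-k : ℤ) ^ 2)
        = (-1 : ℝ) ^ (e + k) * (lorentzian η k - 2 * lorentzian η k ^ 2) := fun k => by
    rw [Int.cast_neg, lorentzian_neg, zpow_add₀ (by norm_num), zpow_add₀ (by norm_num), zpow_neg,
      ← inv_zpow, inv_neg_one]
  rw [lorentzianAltSum, sum_Icc_neg_of_even _ heven]
  have h₀ := abs_sum_neg_one_pow_mul_lorentzian_sub_le hη le_rfl M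
  have h₁ := abs_sum_neg_one_pow_mul_lorentzian_sub_le hη zero_le_one M
  simp only [add_zero] at h₀
  simp only [Int.cast_natCast, Int.cast_add, Int.cast_one,
    show ∀ i : ℕ, e + ((i : ℤ) + 1) = e + 1 + i from fun i => by ring]
  rw [sum_range_neg_one_zpow_add_mul e, sum_range_neg_one_zpow_add_mul (e + 1)]
  refine (abs_add_le _ _).trans ?_
  rw [abs_mul, abs_mul, abs_neg_one_zpow, abs_neg_one_zpow, one_mul, one_mul]
  linarith

lemma abs_sqrt_mul_lorentzianSum_sub_le {η : ℝ} (hη : 0 < η) (M : ℕ) :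
    |√η * lorentzianSum η M - 2 * arctan (√η * M)| ≤ √η := by
  have ht : 0 < √η := sqrt_pos.2 hη
  have hsplit : lorentzianSum η M
      = ∑ i ∈ range M, lorentzian η i + ∑ i ∈ range M, lorentzian η (i + 1) := by
    rw [lorentzianSum, sum_Icc_neg_of_even _ fun k => by rw [Int.cast_neg, lorentzian_neg]]
    push_cast
    rfl
  have hcmp := (lorentzian_antitoneOn hη.le).abs_sum_add_sum_succ_sub_integral_le M
  rw [integral_lorentzian hη, ← hsplit] at hcmp
  have hgap : lorentzian η 0 - lorentzian η M ≤ 1 := by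
    linarith [lorentzian_le_one hη.le 0, lorentzian_pos hη.le M]
  calc |√η * lorentzianSum η M - 2 * arctan (√η * M)|
      = √η * |lorentzianSum η M - 2 * (arctan (√η * M) / √η)| := by
        rw [← abs_of_pos ht, ← abs_mul, abs_of_pos ht]
        congr 1
        field_simp
    _ ≤ √η * 1 := by gcongr; exact hcmp.trans hgap
    _ = √η := mul_one _

lemma tendsto_sqrt_mul_lorentzianSum {α : Type*} {l : Filter α} {η : α → ℝ} {M : α → ℕ}
    (hη : ∀ a, 0 < η a) (hη₀ : Tendsto η l (𝓝 0))
    (hM : Tendsto (fun a => √(η a) * M a) l atTop) :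
    Tendsto (fun a => √(η a) * lorentzianSum (η a) (M a)) l (𝓝 π) := by
  have ht : Tendsto (fun a => √(η a)) l (𝓝 0) := by simpa using hη₀.sqrt
  have harctan : Tendsto (fun a => 2 * arctan (√(η a) * M a)) l (𝓝 π) := by
    have := ((tendsto_arctan_atTop.mono_right nhdsWithin_le_nhds).comp hM).const_mul 2
    rwa [mul_div_cancel₀ _ two_ne_zero] at this
  refine tendsto_of_tendsto_of_tendsto_of_le_of_le
    (by simpa using harctan.sub ht) (by simpa using harctan.add ht) (fun a => ?_) (fun a => ?_)
  all_goals
    have := abs_le.1 (abs_sqrt_mul_lorentzianSum_sub_le (hη a) (M a))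
    dsimp only
    linarith [this.1, this.2]

lemma tendsto_sqrt_mul_lorentzianAltSum {α : Type*} {l : Filter α} {η : α → ℝ} {M : α → ℕ}
    (hη : ∀ a, 0 ≤ η a) (hη₀ : Tendsto η l (𝓝 0)) (e : ℤ) :
    Tendsto (fun a => √(η a) * lorentzianAltSum (η a) e (M a)) l (𝓝 0) := by
  have ht : Tendsto (fun a => √(η a)) l (𝓝 0) := by simpa using hη₀.sqrt
  refine squeeze_zero_norm (fun a => ?_) (by simpa using ht.mul_const 6)
  rw [norm_mul, norm_of_nonneg (sqrt_nonneg _), norm_eq_abs]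
  exact mul_le_mul_of_nonneg_left (abs_lorentzianAltSum_le (hη a) e (M a)) (sqrt_nonneg _)

lemma sq_div_mul_eq_lorentzian_add {η : ℝ} (hη : 0 < η) (c ε x P : ℝ) :
    (η / (1 + η * x ^ 2)) ^ 2 * (c * ((1 + ε) * η⁻¹ * x ^ 2 + (1 - ε) * η⁻¹ ^ 2) / P)
      = c / P * (lorentzian η x + ε * (lorentzian η x - 2 * lorentzian η x ^ 2)) := by
  have : 1 + η * x ^ 2 ≠ 0 := by positivity
  unfold lorentzian
  field_simp
  ring

lemma weighted_sum_eq_lorentzianSum_add {η : ℝ} (hη : 0 < η) (c : ℝ) (e : ℤ) {N : ℕ} (hN : Even N) :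
    ∑ k ∈ Icc (-(N : ℤ) / 2) ((N : ℤ) / 2 - 1), (η / (1 + η * (k : ℝ) ^ 2)) ^ 2 *
      (c * ((1 + (-1 : ℝ) ^ (e + k)) * η⁻¹ * (k : ℝ) ^ 2 +
        (1 - (-1 : ℝ) ^ (e + k)) * η⁻¹ ^ 2) / (N : ℝ) ^ 4)
      = c / (N : ℝ) ^ 4 * (lorentzianSum η (N / 2) + lorentzianAltSum η e (N / 2)) := by
  obtain ⟨M, rfl⟩ := hN
  have hlo : -((M + M : ℕ) : ℤ) / 2 = -(((M + M) / 2 : ℕ) : ℤ) := by omega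
  have hhi : ((M + M : ℕ) : ℤ) / 2 = (((M + M) / 2 : ℕ) : ℤ) := by omega
  rw [hlo, hhi, lorentzianSum, lorentzianAltSum, ← sum_add_distrib, mul_sum]
  exact sum_congr rfl fun k _ => by rw [sq_div_mul_eq_lorentzian_add hη, mul_add]

/-- the weighted spectral sum `‖b‖₂²` satisfies
`‖b‖₂² ~ (m²π³/(18√η)) N⁻⁴` in the joint limit `η → 0`, `√η N → ∞`. -/
theorem stmt_17 (m : ℕ) (hm : 0 < m)
    (S : ℝ → ℕ → ℝ)
    (hS : ∀ (η : ℝ) (N : ℕ), S η N =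
      ∑ k ∈ Finset.Icc (-(N : ℤ) / 2) ((N : ℤ) / 2 - 1),
        (η / (1 + η * (k : ℝ) ^ 2)) ^ 2 *
          (((m : ℝ) ^ 2 * π ^ 2 / 18) *
            ((1 + (-1 : ℝ) ^ ((m : ℤ) + k)) * η⁻¹ * (k : ℝ) ^ 2 +
              (1 - (-1 : ℝ) ^ ((m : ℤ) + k)) * η⁻¹ ^ 2) / (N : ℝ) ^ 4)) :
    ∀ (ηs : ℕ → ℝ) (Ns : ℕ → ℕ),
      (∀ j, 0 < ηs j) → (∀ j, 0 < Ns j) → (∀ j, Even (Ns j)) →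
      Tendsto ηs atTop (nhds 0) →
      Tendsto (fun j => Real.sqrt (ηs j) * (Ns j : ℝ)) atTop atTop →
      Tendsto (fun j => S (ηs j) (Ns j) /
          (((m : ℝ) ^ 2 * π ^ 3 / (18 * Real.sqrt (ηs j))) / (Ns j : ℝ) ^ 4))
        atTop (nhds 1) := by
  intro ηs Ns hη hN hEven hη₀ hηN
  have hM : Tendsto (fun j => √(ηs j) * (Ns j / 2 : ℕ)) atTop atTop := by
    refine (hηN.atTop_div_const two_pos).congr fun j => ?_
    rw [Nat.cast_div_charZero (even_iff_two_dvd.1 (hEven j))]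
    ring
  have hratio : ∀ j, S (ηs j) (Ns j) / ((m : ℝ) ^ 2 * π ^ 3 / (18 * √(ηs j)) / (Ns j : ℝ) ^ 4)
      = (√(ηs j) * lorentzianSum (ηs j) (Ns j / 2)
        + √(ηs j) * lorentzianAltSum (ηs j) m (Ns j / 2)) / π := fun j => by
    have : (m : ℝ) ≠ 0 := by positivity
    have : (Ns j : ℝ) ≠ 0 := by have := hN j; positivity
    have : √(ηs j) ≠ 0 := (sqrt_pos.2 (hη j)).ne'
    rw [hS, weighted_sum_eq_lorentzianSum_add (hη j) _ _ (hEven j)]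
    field_simp
  simp_rw [hratio]
  simpa [pi_ne_zero] using ((tendsto_sqrt_mul_lorentzianSum hη hη₀ hM).add
    (tendsto_sqrt_mul_lorentzianAltSum (fun j => (hη j).le) hη₀ m)).div_const π
end
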